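/- arXiv:1210.5460 — 3 statements merged into one kernel-verified Lean document; each statement's English description precedes it below -/
import Mathlib

section
/- For every multiset s of positive integers with sum at most 11, s is uniquely determined among multisets of positive integers by the triple (sum s, prod s, card s). That is, if s and t are multisets of positive integers with equal sums ≤ 11, equal products, and equal cardinalities, then s = t. -/
/-!
A multiset of positive integers with sum `n` has all its parts in `[1, n]`, so it is one of the
finitely many partitions of `n`. For `n ≤ 11` the claim is then a finite check, which the kernel
carries out on an explicit list of partitions.
-/

/-- A list containing every multiset with parts in `[1, m]` and sum `n`. -/
def boundedPartitions : ℕ → ℕ → List (Multiset ℕ)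
  | 0, n => if n = 0 then [0] else []
  | m + 1, n => (List.range (n / (m + 1) + 1)).flatMap fun c =>
      (boundedPartitions m (n - c * (m + 1))).map (Multiset.replicate c (m + 1) + ·)

theorem mem_boundedPartitions_of_forall_mem {s : Multiset ℕ} {m : ℕ}
    (hs : ∀ x ∈ s, 0 < x ∧ x ≤ m) : s ∈ boundedPartitions m s.sum := by
  induction m generalizing s with
  | zero =>
    obtain rfl : s = 0 := Multiset.eq_zero_of_forall_notMem fun x hx => by
      have := hs x hx; omega
    simp [boundedPartitions]
  | succ m ih =>
    set r := s.filter (· ≠ m + 1)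
    have hsplit : Multiset.replicate (s.count (m + 1)) (m + 1) + r = s := by
      rw [← Multiset.filter_eq', Multiset.filter_add_not]
    have hr : r ∈ boundedPartitions m r.sum := ih fun x hx => by
      rw [Multiset.mem_filter] at hx
      have := hs x hx.1; omega
    have hsum : s.sum = s.count (m + 1) * (m + 1) + r.sum := by
      conv_lhs => rw [← hsplit]
      simp [Multiset.sum_replicate]
    rw [boundedPartitions, List.mem_flatMap]
    refine ⟨s.count (m + 1), ?_, List.mem_map.2 ⟨r, ?_, hsplit⟩⟩
    · rw [List.mem_range, Nat.lt_succ_iff, Nat.le_div_iff_mul_le m.add_one_pos]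
      omega
    · rwa [hsum, Nat.add_sub_cancel_left]

theorem mem_boundedPartitions_sum_sum {s : Multiset ℕ} (hs : ∀ x ∈ s, 0 < x) :
    s ∈ boundedPartitions s.sum s.sum :=
  mem_boundedPartitions_of_forall_mem fun x hx => ⟨hs x hx, Multiset.le_sum_of_mem hx⟩

set_option maxRecDepth 100000 in
theorem eq_of_mem_boundedPartitions_of_prod_eq_of_card_eq : ∀ n ≤ 11,
    ∀ s ∈ boundedPartitions n n, ∀ t ∈ boundedPartitions n n,
      s.prod = t.prod → Multiset.card s = Multiset.card t → s = t := by
  decide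

theorem sum_le_eleven_unique
    (s t : Multiset ℕ) (hs : ∀ x ∈ s, 0 < x) (ht : ∀ x ∈ t, 0 < x)
    (hle : s.sum ≤ 11) (hsum : s.sum = t.sum)
    (hprod : s.prod = t.prod) (hcard : Multiset.card s = Multiset.card t) :
    s = t := by
  have ht' := mem_boundedPartitions_sum_sum ht
  rw [← hsum] at ht'
  exact eq_of_mem_boundedPartitions_of_prod_eq_of_card_eq _ hle s
    (mem_boundedPartitions_sum_sum hs) t ht' hprod hcard
end

section
/- Define a positive integer p to be 'ambiguous for bus n' if there exist distinct multisets s ≠ t of positive integers with sum s = sum t = n, card s = card t, and prod s = prod t = p. Then for every n ≥ 13 there exist at least two distinct p ambiguous for bus n. -/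
def Ambiguous (n p : ℕ) : Prop :=
  ∃ s t : Multiset ℕ, (∀ x ∈ s, 0 < x) ∧ (∀ x ∈ t, 0 < x) ∧ s ≠ t ∧
    s.sum = n ∧ t.sum = n ∧ Multiset.card s = Multiset.card t ∧
    s.prod = p ∧ t.prod = p

/-! Two ambiguous products for `n = 13`, namely `2·2·9 = 1·6·6 = 36` and
`1·2·2·2·6 = 1·1·3·4·4 = 48`; adding parts equal to `1` raises the sum without changing the
number of parts or the product, so both stay ambiguous for every `n ≥ 13`. -/

theorem Ambiguous.add_ones {n p : ℕ} (h : Ambiguous n p) (k : ℕ) : Ambiguous (n + k) p := by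
  obtain ⟨s, t, hs, ht, hst, hsum_s, hsum_t, hcard, hprod_s, hprod_t⟩ := h
  have pos_of_pad {u : Multiset ℕ} (hu : ∀ x ∈ u, 0 < x) :
      ∀ x ∈ u + Multiset.replicate k 1, 0 < x := by
    intro x hx
    rcases Multiset.mem_add.1 hx with hx | hx
    · exact hu x hx
    · rw [Multiset.eq_of_mem_replicate hx]; exact Nat.one_pos
  refine ⟨s + Multiset.replicate k 1, t + Multiset.replicate k 1, pos_of_pad hs, pos_of_pad ht,
    fun h => hst (add_right_cancel h), ?_, ?_, ?_, ?_, ?_⟩ <;>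
    simp [hsum_s, hsum_t, hcard, hprod_s, hprod_t]

theorem Ambiguous.mono {m n p : ℕ} (h : Ambiguous m p) (hmn : m ≤ n) : Ambiguous n p := by
  obtain ⟨k, rfl⟩ := Nat.exists_eq_add_of_le hmn
  exact h.add_ones k

theorem ambiguous_13_36 : Ambiguous 13 36 :=
  ⟨{2, 2, 9}, {1, 6, 6}, by decide, by decide, by decide, rfl, rfl, rfl, rfl, rfl⟩

theorem ambiguous_13_48 : Ambiguous 13 48 :=
  ⟨{1, 2, 2, 2, 6}, {1, 1, 3, 4, 4}, by decide, by decide, by decide, rfl, rfl, rfl, rfl, rfl⟩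

theorem two_ambiguous_products_of_ge_13 (n : ℕ) (hn : 13 ≤ n) :
    ∃ p q : ℕ, 0 < p ∧ 0 < q ∧ p ≠ q ∧ Ambiguous n p ∧ Ambiguous n q :=
  ⟨36, 48, by norm_num, by norm_num, by norm_num, ambiguous_13_36.mono hn,
    ambiguous_13_48.mono hn⟩
end

section
/- For every n ≤ 11 and all multisets s, t of positive integers with sum s = sum t = n, card s = card t, and prod s = prod t, we have s = t. Hence no bus number below 12 permits wizard A to say 'no'. -/
/-- Fuel-based enumeration of partitions of `n` with parts `≤ m`. -/
def partsF : ℕ → ℕ → ℕ → List (List ℕ)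
  | 0, n, _ => if n = 0 then [[]] else []
  | (f+1), n, m =>
    if n = 0 then [[]] else
      (List.range' 1 (min n m)).flatMap fun k => (partsF f (n - k) k).map (k :: ·)

lemma mem_partsF : ∀ (fuel : ℕ) (l : List ℕ) (m : ℕ),
    l.Pairwise (· ≥ ·) → (∀ x ∈ l, 0 < x) → (∀ x ∈ l, x ≤ m) → l.sum ≤ fuel →
    l ∈ partsF fuel l.sum m := by
  intro fuel
  induction fuel with
  | zero =>
    intro l m hsort hpos hle hsum
    match l with
    | [] => simp [partsF]
    | k :: rest =>
      exfalso
      have := hpos k (by simp)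
      simp [List.sum_cons] at hsum
      omega
  | succ f ih =>
    intro l m hsort hpos hle hsum
    match l with
    | [] => simp [partsF]
    | k :: rest =>
      have hk : 0 < k := hpos k (by simp)
      have hkm : k ≤ m := hle k (by simp)
      have hkrest : ∀ x ∈ rest, x ≤ k := by
        intro x hx
        exact (List.pairwise_cons.mp hsort).1 x hx
      have hn : (k :: rest).sum = k + rest.sum := by simp
      rw [hn]
      have hne : k + rest.sum ≠ 0 := by omega
      simp only [partsF, hne, if_false, List.mem_flatMap]
      refine ⟨k, ?_, ?_⟩
      · rw [List.mem_range'_1]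
        refine ⟨by omega, ?_⟩
        have : k ≤ min (k + rest.sum) m := le_min (by omega) hkm
        omega
      · rw [List.mem_map]
        refine ⟨rest, ?_, rfl⟩
        have hsum' : rest.sum ≤ f := by
          simp [List.sum_cons] at hsum; omega
        have := ih rest k (List.pairwise_cons.mp hsort).2
          (fun x hx => hpos x (by simp [hx])) hkrest hsum'
        have harith : k + rest.sum - k = rest.sum := by omega
        rw [harith]
        exact this

set_option maxRecDepth 100000 in
lemma key_lists : ∀ n ∈ Finset.range 12, ∀ a ∈ partsF n n n, ∀ b ∈ partsF n n n,
    a.length = b.length → a.prod = b.prod → a = b := by decide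

theorem no_ambiguity_below_12 (n : ℕ) (hn : n ≤ 11)
    (s t : Multiset ℕ) (hs : ∀ x ∈ s, 0 < x) (ht : ∀ x ∈ t, 0 < x)
    (hsum_s : s.sum = n) (hsum_t : t.sum = n)
    (hcard : Multiset.card s = Multiset.card t) (hprod : s.prod = t.prod) :
    s = t := by
  set ls := s.sort (· ≥ ·) with hls
  set lt := t.sort (· ≥ ·) with hlt
  have hcs : (↑ls : Multiset ℕ) = s := Multiset.sort_eq _ _
  have hct : (↑lt : Multiset ℕ) = t := Multiset.sort_eq _ _
  have hmem : ∀ x ∈ ls, x ∈ s := by intro x hx; rw [← hcs]; exact_mod_cast hx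
  have hmemt : ∀ x ∈ lt, x ∈ t := by intro x hx; rw [← hct]; exact_mod_cast hx
  have hsum_ls : ls.sum = n := by rw [← hsum_s, ← hcs]; simp
  have hsum_lt : lt.sum = n := by rw [← hsum_t, ← hct]; simp
  have hbound_s : ∀ x ∈ ls, x ≤ n := by
    intro x hx
    rw [← hsum_s]
    exact Multiset.single_le_sum (fun y _ => Nat.zero_le y) x (hmem x hx)
  have hbound_t : ∀ x ∈ lt, x ≤ n := by
    intro x hx
    rw [← hsum_t]
    exact Multiset.single_le_sum (fun y _ => Nat.zero_le y) x (hmemt x hx)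
  have h1 : ls ∈ partsF n n n := by
    have := mem_partsF n ls n (Multiset.pairwise_sort _ _)
      (fun x hx => hs x (hmem x hx)) hbound_s (by rw [hsum_ls])
    rwa [hsum_ls] at this
  have h2 : lt ∈ partsF n n n := by
    have := mem_partsF n lt n (Multiset.pairwise_sort _ _)
      (fun x hx => ht x (hmemt x hx)) hbound_t (by rw [hsum_lt])
    rwa [hsum_lt] at this
  have hlen : ls.length = lt.length := by
    have : Multiset.card s = ls.length := by rw [← hcs]; simp
    have h2' : Multiset.card t = lt.length := by rw [← hct]; simp
    omega
  have hpr : ls.prod = lt.prod := by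
    have : s.prod = ls.prod := by rw [← hcs]; simp
    have h2' : t.prod = lt.prod := by rw [← hct]; simp
    rw [← this, ← h2', hprod]
  have := key_lists n (Finset.mem_range.mpr (by omega)) ls h1 lt h2 hlen hpr
  rw [← hcs, ← hct, this]
end
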